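/- Let X ⊆ ℝ^n be a nonempty (possibly unbounded) open set, let F : X × ℝ^M → ℝ be jointly continuous, and let f : X → ℝ be continuous with f(x) ∈ int R_x for every x ∈ X. Then for every x ∈ X there exists δ > 0 such that for every finite subset A ⊂ X ∩ B(x, δ) there exists a smooth function U ∈ C^∞(X) with T(y,D)U(y) = f(y) for all y ∈ A, where B(x, δ) is the open ball of radius δ around x in ℝ^n. -/

import Mathlib

/-!
Any `δ` works. At each point `y` of `A` choose `ξ_y` with `F(y, ξ_y) = f(y)`; since the
multi-indices `e i` are distinct, the Taylor polynomial `∑ ξ_{y,i} (x - y)^(e i) / (e i)!` has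
exactly the derivatives `D^(e i) = ξ_{y,i}` at `y`. Smooth bumps that equal `1` near one point of
`A` and vanish near the others glue these polynomials into one `U ∈ C^∞`, and since `D^p` is
local, `U` has the same jet as the polynomial at each `y ∈ A`.
-/

open Set Topology Filter

/-- The partial derivative of `f` in the `i`-th coordinate direction. -/
noncomputable def pder {n : ℕ} (i : Fin n) (f : (Fin n → ℝ) → ℝ) : (Fin n → ℝ) → ℝ :=
  fun x => fderiv ℝ f x (Pi.single i 1)

/-- The multi-index partial derivative `D^p f` for a multi-index `p : Fin n → ℕ`. -/
noncomputable def mderiv {n : ℕ} (p : Fin n → ℕ) (f : (Fin n → ℝ) → ℝ) : (Fin n → ℝ) → ℝ :=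
  (List.finRange n).foldr (fun i g => (pder i)^[p i] g) f

/-- The nonlinear partial differential operator `T(x,D)` associated to `F`, where
`e : Fin M → (Fin n → ℕ)` enumerates the multi-indices `p` with `|p| ≤ m`:
`T(x,D)U(x) = F(x, (D^p U(x))_{|p| ≤ m})`. -/
noncomputable def TOp {n M : ℕ} (e : Fin M → (Fin n → ℕ))
    (F : (Fin n → ℝ) → (Fin M → ℝ) → ℝ) (U : (Fin n → ℝ) → ℝ) : (Fin n → ℝ) → ℝ :=
  fun x => F x (fun i => mderiv (e i) U x)

open scoped ContDiff

noncomputable section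

section Bump

variable {E : Type*} [NormedAddCommGroup E] [NormedSpace ℝ E] [HasContDiffBump E]

theorem exists_contDiffBump_tsupport_subset {s : Set E} {c : E} (hs : s ∈ 𝓝 c) :
    ∃ b : ContDiffBump c, tsupport b ⊆ s := by
  obtain ⟨ε, hε, hball⟩ := Metric.mem_nhds_iff.1 hs
  refine ⟨⟨ε / 4, ε / 2, by positivity, by linarith⟩, ?_⟩
  rw [ContDiffBump.tsupport_eq]
  exact (Metric.closedBall_subset_ball (by linarith)).trans hball

/-- Each bump is `1` near its centre and vanishes near the other points of `A`. -/
theorem exists_contDiff_eventuallyEq_on_finset {k : ℕ∞} (A : Finset E) (P : E → E → ℝ)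
    (hP : ∀ y ∈ A, ContDiff ℝ k (P y)) :
    ∃ U : E → ℝ, ContDiff ℝ k U ∧ ∀ y ∈ A, U =ᶠ[𝓝 y] P y := by
  classical
  choose b hb using fun y : E =>
    exists_contDiffBump_tsupport_subset ((A.erase y).finite_toSet.isClosed.compl_mem_nhds
      (Finset.notMem_erase y A))
  refine ⟨fun z => ∑ w ∈ A, b w z * P w z,
    ContDiff.sum fun w hw => (b w).contDiff.mul (hP w hw), fun y hy => ?_⟩
  have hzero : ∀ w ∈ A.erase y, ⇑(b w) =ᶠ[𝓝 y] 0 := fun w hw =>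
    notMem_tsupport_iff_eventuallyEq.1 fun h =>
      hb w h (Finset.mem_erase.2 ⟨fun hyw => Finset.ne_of_mem_erase hw hyw.symm, hy⟩)
  filter_upwards [(b y).eventuallyEq_one, (eventually_all_finset _).2 hzero] with z hone hothers
  rw [← Finset.add_sum_erase A _ hy, Finset.sum_eq_zero fun w hw => by simp [hothers w hw]]
  simp [hone]

end Bump

variable {n : ℕ}

variable (n) in
def contDiffSubmodule : Submodule ℝ ((Fin n → ℝ) → ℝ) where
  carrier := {f | ContDiff ℝ ∞ f}
  add_mem' hf hg := (show ContDiff ℝ ∞ _ from hf).add hg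
  zero_mem' := show ContDiff ℝ ∞ 0 from contDiff_const
  smul_mem' a _ hf := (show ContDiff ℝ ∞ _ from hf).const_smul a

theorem mem_contDiffSubmodule {f : (Fin n → ℝ) → ℝ} :
    f ∈ contDiffSubmodule n ↔ ContDiff ℝ ∞ f :=
  Iff.rfl

theorem ContDiff.pder {f : (Fin n → ℝ) → ℝ} (hf : ContDiff ℝ ∞ f) (i : Fin n) :
    ContDiff ℝ ∞ (pder i f) :=
  (hf.fderiv_right le_rfl).clm_apply contDiff_const

theorem pder_add {f g : (Fin n → ℝ) → ℝ} (hf : Differentiable ℝ f) (hg : Differentiable ℝ g)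
    (i : Fin n) : pder i (f + g) = pder i f + pder i g := by
  ext x
  simp [pder, fderiv_add (hf x) (hg x)]

theorem pder_const_smul {f : (Fin n → ℝ) → ℝ} (hf : Differentiable ℝ f) (a : ℝ) (i : Fin n) :
    pder i (a • f) = a • pder i f := by
  ext x
  simp [pder, fderiv_const_smul (hf x)]

theorem differentiable_of_mem_contDiffSubmodule {f : (Fin n → ℝ) → ℝ}
    (hf : f ∈ contDiffSubmodule n) : Differentiable ℝ f :=
  (mem_contDiffSubmodule.1 hf).differentiable (by simp)

def pderLinear (i : Fin n) : Module.End ℝ (contDiffSubmodule n) where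
  toFun f := ⟨pder i f, (mem_contDiffSubmodule.1 f.2).pder i⟩
  map_add' f g := Subtype.ext <| pder_add (differentiable_of_mem_contDiffSubmodule f.2)
    (differentiable_of_mem_contDiffSubmodule g.2) i
  map_smul' a f := Subtype.ext <|
    pder_const_smul (differentiable_of_mem_contDiffSubmodule f.2) a i

def mderivLinear (p : Fin n → ℕ) : Module.End ℝ (contDiffSubmodule n) :=
  ((List.finRange n).map fun i => pderLinear i ^ p i).prod

theorem mderiv_eq_mderivLinear (p : Fin n → ℕ) (f : contDiffSubmodule n) :
    mderiv p f = mderivLinear p f := by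
  unfold mderiv mderivLinear
  induction List.finRange n with
  | nil => rfl
  | cons i l ih =>
    have hcoe : Function.Semiconj Subtype.val (pderLinear i) (pder i) := fun _ => rfl
    rw [List.foldr_cons, List.map_cons, List.prod_cons, Module.End.mul_apply,
      Module.End.pow_apply, ih]
    exact ((hcoe.iterate_right (p i)) _).symm

theorem Filter.EventuallyEq.pder {f g : (Fin n → ℝ) → ℝ} {x : Fin n → ℝ} (h : f =ᶠ[𝓝 x] g)
    (i : Fin n) : pder i f =ᶠ[𝓝 x] pder i g := by
  filter_upwards [h.fderiv (𝕜 := ℝ)] with y hy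
  simp only [_root_.pder, hy]

theorem Filter.EventuallyEq.mderiv {f g : (Fin n → ℝ) → ℝ} {x : Fin n → ℝ} (h : f =ᶠ[𝓝 x] g)
    (p : Fin n → ℕ) : mderiv p f =ᶠ[𝓝 x] mderiv p g := by
  unfold _root_.mderiv
  induction List.finRange n with
  | nil => exact h
  | cons i l ih =>
    simp only [List.foldr_cons]
    induction p i with
    | zero => exact ih
    | succ k ihk =>
      rw [Function.iterate_succ_apply', Function.iterate_succ_apply']
      exact ihk.pder i

def centeredMonomial (c : Fin n → ℝ) (q : Fin n → ℕ) : contDiffSubmodule n :=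
  ⟨fun x => ∏ j, (x j - c j) ^ q j, mem_contDiffSubmodule.2 (by fun_prop)⟩

theorem coe_centeredMonomial (c : Fin n → ℝ) (q : Fin n → ℕ) :
    (centeredMonomial c q : (Fin n → ℝ) → ℝ) = fun x => ∏ j, (x j - c j) ^ q j :=
  rfl

theorem centeredMonomial_apply_self (c : Fin n → ℝ) (r : Fin n → ℕ) :
    (centeredMonomial c r : (Fin n → ℝ) → ℝ) c = if r = 0 then 1 else 0 := by
  split_ifs with hr
  · simp [coe_centeredMonomial, hr]
  · obtain ⟨j, hj⟩ := Function.ne_iff.1 hr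
    exact Finset.prod_eq_zero (Finset.mem_univ j) (by simp [zero_pow hj])

theorem pderLinear_centeredMonomial (c : Fin n → ℝ) (q : Fin n → ℕ) (i : Fin n) :
    pderLinear i (centeredMonomial c q) =
      (q i : ℝ) • centeredMonomial c (Function.update q i (q i - 1)) := by
  ext x
  have hfactor : ∀ j, HasFDerivAt (fun y : Fin n → ℝ => (y j - c j) ^ q j)
      (((q j : ℝ) * (x j - c j) ^ (q j - 1)) • ContinuousLinearMap.proj j) x := fun j => by
    have hpow : HasDerivAt (fun t : ℝ => (t - c j) ^ q j)
        ((q j : ℝ) * (x j - c j) ^ (q j - 1)) (x j) := by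
      simpa using ((hasDerivAt_id (x j)).sub_const (c j)).fun_pow (q j)
    exact hpow.comp_hasFDerivAt x
      (ContinuousLinearMap.proj j : (Fin n → ℝ) →L[ℝ] ℝ).hasFDerivAt
  have hprod := (HasFDerivAt.finsetProd (u := Finset.univ) fun j _ => hfactor j).fderiv
  change fderiv ℝ (fun y => ∏ j, (y j - c j) ^ q j) x (Pi.single i 1) = _
  rw [hprod, sum_apply, Finset.sum_eq_single i (fun j _ hji => by
    simp [Pi.single_eq_of_ne hji]) (by simp)]
  simp only [smul_apply, ContinuousLinearMap.proj_apply, Pi.single_eq_same,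
    smul_eq_mul, mul_one, Submodule.coe_smul, Pi.smul_apply, coe_centeredMonomial]
  have hrest : ∏ k ∈ Finset.univ.erase i, (x k - c k) ^ Function.update q i (q i - 1) k =
      ∏ k ∈ Finset.univ.erase i, (x k - c k) ^ q k :=
    Finset.prod_congr rfl fun k hk => by rw [Function.update_of_ne (Finset.ne_of_mem_erase hk)]
  rw [← Finset.mul_prod_erase Finset.univ _ (Finset.mem_univ i), Function.update_self, hrest]
  ring

theorem pderLinear_pow_centeredMonomial (c : Fin n → ℝ) (q : Fin n → ℕ) (i : Fin n) (k : ℕ) :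
    (pderLinear i ^ k) (centeredMonomial c q) =
      ((q i).descFactorial k : ℝ) • centeredMonomial c (Function.update q i (q i - k)) := by
  induction k with
  | zero => simp
  | succ k ih =>
    rw [pow_succ', Module.End.mul_apply, ih, map_smul, pderLinear_centeredMonomial, smul_smul,
      Function.update_idem, Function.update_self, Nat.sub_sub, Nat.descFactorial_succ,
      Nat.cast_mul, mul_comm]

theorem list_prod_pderLinear_pow_centeredMonomial (c : Fin n → ℝ) (p q : Fin n → ℕ)
    (l : List (Fin n)) (hl : l.Nodup) :
    (l.map fun i => pderLinear i ^ p i).prod (centeredMonomial c q) =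
      (l.map fun j => ((q j).descFactorial (p j) : ℝ)).prod •
        centeredMonomial c (fun j => if j ∈ l then q j - p j else q j) := by
  induction l with
  | nil => simp
  | cons i l ih =>
    obtain ⟨hil, hl⟩ := List.nodup_cons.1 hl
    have hupdate : Function.update (fun j => if j ∈ l then q j - p j else q j) i (q i - p i) =
        fun j => if j ∈ i :: l then q j - p j else q j := by
      ext j
      by_cases hj : j = i
      · subst hj; simp
      · simp [hj]
    rw [List.map_cons, List.prod_cons, Module.End.mul_apply, ih hl, map_smul,
      pderLinear_pow_centeredMonomial, smul_smul, if_neg hil, hupdate, List.map_cons,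
      List.prod_cons, mul_comm]

theorem mderivLinear_centeredMonomial (c : Fin n → ℝ) (p q : Fin n → ℕ) :
    mderivLinear p (centeredMonomial c q) =
      (∏ j, ((q j).descFactorial (p j) : ℝ)) • centeredMonomial c (q - p) := by
  rw [mderivLinear, list_prod_pderLinear_pow_centeredMonomial c p q _ (List.nodup_finRange n),
    ← Fin.prod_univ_def]
  simp only [List.mem_finRange, if_true]
  rfl

/-- If `q ≠ p`, either some `q j < p j`, so the derivative vanishes identically, or some factor
`x j - c j` survives and vanishes at `c`. -/
theorem mderiv_centeredMonomial_self (c : Fin n → ℝ) (p q : Fin n → ℕ) :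
    mderiv p (centeredMonomial c q) c = if q = p then ∏ j, ((p j).factorial : ℝ) else 0 := by
  rw [mderiv_eq_mderivLinear, mderivLinear_centeredMonomial, Submodule.coe_smul, Pi.smul_apply,
    centeredMonomial_apply_self, smul_eq_mul]
  by_cases hqp : q = p
  · subst hqp
    simp [Nat.descFactorial_self]
  rw [if_neg hqp]
  by_cases hle : q - p = 0
  · obtain ⟨-, j, hj⟩ := Pi.lt_def.1 (lt_of_le_of_ne (tsub_eq_zero_iff_le.1 hle) hqp)
    rw [Finset.prod_eq_zero (Finset.mem_univ j) (by simp [Nat.descFactorial_eq_zero_iff_lt.2 hj]),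
      zero_mul]
  · rw [if_neg hle, mul_zero]

def jetPolynomial {ι : Type*} [Fintype ι] (e : ι → Fin n → ℕ) (c : Fin n → ℝ) (ξ : ι → ℝ) :
    contDiffSubmodule n :=
  ∑ i, (ξ i / ∏ j, ((e i j).factorial : ℝ)) • centeredMonomial c (e i)

theorem mderiv_jetPolynomial_self {ι : Type*} [Fintype ι] {e : ι → Fin n → ℕ}
    (he : Function.Injective e) (c : Fin n → ℝ) (ξ : ι → ℝ) (k : ι) :
    mderiv (e k) (jetPolynomial e c ξ) c = ξ k := by
  classical
  have hterm : ∀ i, (mderivLinear (e k) ((ξ i / ∏ j, ((e i j).factorial : ℝ)) •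
      centeredMonomial c (e i)) : (Fin n → ℝ) → ℝ) c =
        (ξ i / ∏ j, ((e i j).factorial : ℝ)) * if i = k then ∏ j, ((e k j).factorial : ℝ) else 0 :=
    fun i => by
      rw [map_smul, Submodule.coe_smul, Pi.smul_apply, ← mderiv_eq_mderivLinear,
        mderiv_centeredMonomial_self]
      simp only [he.eq_iff, smul_eq_mul]
  rw [mderiv_eq_mderivLinear, jetPolynomial, map_sum, Submodule.coe_sum, Finset.sum_apply,
    Finset.sum_eq_single k (fun i _ hik => by rw [hterm, if_neg hik, mul_zero]) (by simp),
    hterm, if_pos rfl, div_mul_cancel₀]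
  exact Finset.prod_ne_zero_iff.2 fun j _ => by positivity

end

theorem exact_solution_on_finite_sets_general
    {n M : ℕ} (X : Set (Fin n → ℝ))
    (e : Fin M → (Fin n → ℕ)) (he : Function.Injective e)
    (F : (Fin n → ℝ) → (Fin M → ℝ) → ℝ)
    (f : (Fin n → ℝ) → ℝ)
    (hrc : ∀ x ∈ X, f x ∈ interior (Set.range (F x))) :
    ∀ x ∈ X, ∃ δ > (0 : ℝ), ∀ A : Finset (Fin n → ℝ),
      (A : Set (Fin n → ℝ)) ⊆ X ∩ Metric.ball x δ →
      ∃ U : (Fin n → ℝ) → ℝ, ContDiffOn ℝ (⊤ : ℕ∞) U X ∧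
        ∀ y ∈ A, TOp e F U y = f y := by
  intro x _
  refine ⟨1, one_pos, fun A hA => ?_⟩
  have hsolvable : ∀ y ∈ A, ∃ ξ, F y ξ = f y := fun y hy =>
    mem_range.1 (interior_subset (hrc y (hA hy).1))
  choose! ξ hξ using hsolvable
  obtain ⟨U, hU, hlocal⟩ := exists_contDiff_eventuallyEq_on_finset A
    (fun y => jetPolynomial e y (ξ y)) fun y _ =>
      mem_contDiffSubmodule.1 (jetPolynomial e y (ξ y)).2
  refine ⟨U, hU.contDiffOn, fun y hy => ?_⟩
  have hjet : (fun i => mderiv (e i) U y) = ξ y := funext fun i =>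
    ((hlocal y hy).mderiv (e i)).eq_of_nhds.trans (mderiv_jetPolynomial_self he y (ξ y) i)
  rw [TOp, hjet, hξ y hy]

/-- **Corollary 1.** Let `X ⊆ ℝⁿ` be a nonempty open set, `F` jointly continuous and
`f` continuous with `f(x) ∈ int R_x` for all `x ∈ X`. Then for every `x ∈ X` there is
`δ > 0` such that for every finite `A ⊆ X ∩ B(x,δ)` there is `U ∈ C^∞(X)` with
`T(y,D)U(y) = f(y)` for all `y ∈ A`. -/
theorem exact_solution_on_finite_sets
    {n m M : ℕ} (X : Set (Fin n → ℝ)) (hXopen : IsOpen X) (hXne : X.Nonempty)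
    (e : Fin M → (Fin n → ℕ)) (he : Function.Injective e)
    (hrange : ∀ p : Fin n → ℕ, (∑ i, p i) ≤ m ↔ p ∈ Set.range e)
    (F : (Fin n → ℝ) → (Fin M → ℝ) → ℝ)
    (hF : ContinuousOn (fun q : (Fin n → ℝ) × (Fin M → ℝ) => F q.1 q.2) (X ×ˢ Set.univ))
    (f : (Fin n → ℝ) → ℝ) (hf : ContinuousOn f X)
    (hrc : ∀ x ∈ X, f x ∈ interior (Set.range (F x))) :
    ∀ x ∈ X, ∃ δ > (0 : ℝ), ∀ A : Finset (Fin n → ℝ),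
      (A : Set (Fin n → ℝ)) ⊆ X ∩ Metric.ball x δ →
      ∃ U : (Fin n → ℝ) → ℝ, ContDiffOn ℝ (⊤ : ℕ∞) U X ∧
        ∀ y ∈ A, TOp e F U y = f y :=
  exact_solution_on_finite_sets_general X e he F f hrc
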